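/- Let E = E(n,c) be a uniform Cantor set and μ_P the measure determined by an n-matching sequence P which is ultimately 1-uniform (there is k₀ with p_{k,i} = 1/n_k for all k ≥ k₀ and all i). Then μ_P is a doubling measure on E. -/
import Mathlib


open Finset MeasureTheory Filter Topology
open scoped ENNReal NNReal

/-- Length of a level-`k` component of the uniform Cantor set `E(n,c)`. -/
noncomputable def cdelta (n : ℕ → ℕ) (c : ℕ → ℝ) (k : ℕ) : ℝ :=
  ∏ i ∈ Finset.Icc 1 k, (1 - ((n i : ℝ) - 1) * c i) / (n i : ℝ)

/-- Length of a level-`k` gap of the uniform Cantor set `E(n,c)`. -/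
noncomputable def ceps (n : ℕ → ℕ) (c : ℕ → ℝ) (k : ℕ) : ℝ :=
  c k * cdelta n c (k - 1)

/-- Left endpoint of the level-`k` component indexed by the word `w` (positions `1,…,k`). -/
noncomputable def leftpt (n : ℕ → ℕ) (c : ℕ → ℝ) (w : ℕ → ℕ) (k : ℕ) : ℝ :=
  ∑ j ∈ Finset.Icc 1 k, ((w j : ℝ) - 1) * (cdelta n c j + ceps n c j)

/-- `w` is a word of length `k`: `1 ≤ w j ≤ n j` for `1 ≤ j ≤ k`. -/
def IsWord (n : ℕ → ℕ) (w : ℕ → ℕ) (k : ℕ) : Prop :=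
  ∀ j, 1 ≤ j → j ≤ k → 1 ≤ w j ∧ w j ≤ n j

/-- The level-`k` component `I_w` of the uniform Cantor set. -/
noncomputable def cInt (n : ℕ → ℕ) (c : ℕ → ℝ) (w : ℕ → ℕ) (k : ℕ) : Set ℝ :=
  Set.Icc (leftpt n c w k) (leftpt n c w k + cdelta n c k)

/-- The set `E_k`, union of all level-`k` components. -/
def levelSet (n : ℕ → ℕ) (c : ℕ → ℝ) (k : ℕ) : Set ℝ :=
  ⋃ w ∈ {w : ℕ → ℕ | IsWord n w k}, cInt n c w k

/-- The uniform Cantor set `E(n,c) = ⋂_k E_k`. -/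
def uniformCantorSet (n : ℕ → ℕ) (c : ℕ → ℝ) : Set ℝ :=
  ⋂ k, levelSet n c k

/-- Standing assumptions on the data: `n_k ≥ 2`, `c_k ∈ (0,1)`, `(n_k - 1) c_k < 1`. -/
def CantorParams (n : ℕ → ℕ) (c : ℕ → ℝ) : Prop :=
  ∀ k, 1 ≤ k → 2 ≤ n k ∧ 0 < c k ∧ c k < 1 ∧ ((n k : ℝ) - 1) * c k < 1

/-- `p` is an `n`-matching sequence of positive probability vectors. -/
def MatchingSeq (n : ℕ → ℕ) (p : ℕ → ℕ → ℝ) : Prop :=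
  ∀ k, 1 ≤ k → (∀ i, 1 ≤ i → i ≤ n k → 0 < p k i) ∧ ∑ i ∈ Finset.Icc 1 (n k), p k i = 1

/-- `μ` is the Borel probability measure on `E(n,c)` determined by the matching sequence `p`:
`μ(I_{wi}) = p_{k,i} μ(I_w)`. -/
def MatchingMeasure (n : ℕ → ℕ) (c : ℕ → ℝ) (p : ℕ → ℕ → ℝ) (μ : Measure ℝ) : Prop :=
  IsProbabilityMeasure μ ∧ μ (uniformCantorSet n c)ᶜ = 0 ∧
    ∀ k, 1 ≤ k → ∀ w : ℕ → ℕ, IsWord n w (k - 1) → ∀ i, 1 ≤ i → i ≤ n k →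
      μ (cInt n c (Function.update w k i) k) =
        ENNReal.ofReal (p k i) * μ (cInt n c w (k - 1))

/-- `μ` is doubling with constant `C` on the metric space `E` (balls of `E`). -/
def DoublingOn (μ : Measure ℝ) (E : Set ℝ) (C : ℝ≥0∞) : Prop :=
  ∀ x ∈ E, ∀ r : ℝ, 0 < r →
    0 < μ (Metric.ball x (2 * r) ∩ E) ∧
      μ (Metric.ball x (2 * r) ∩ E) ≤ C * μ (Metric.ball x r ∩ E) ∧
      μ (Metric.ball x (2 * r) ∩ E) < ⊤

/-- The vector `(p 1, …, p k)` is `C`-uniform: any two adjacent (overlapping allowed) sums of `l`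
consecutive entries are comparable within the factor `C`. -/
def IsUniform (C : ℝ) (k : ℕ) (p : ℕ → ℝ) : Prop :=
  ∀ i j l : ℕ, i ≤ j → j ≤ i + l → j + l ≤ k →
    C⁻¹ * (∑ t ∈ Finset.Ioc j (j + l), p t) ≤ (∑ t ∈ Finset.Ioc i (i + l), p t) ∧
      (∑ t ∈ Finset.Ioc i (i + l), p t) ≤ C * ∑ t ∈ Finset.Ioc j (j + l), p t


section Geometry
variable {n : ℕ → ℕ} {c : ℕ → ℝ}

lemma cdelta_zero : cdelta n c 0 = 1 := by
  simp [cdelta]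

lemma cdelta_succ (k : ℕ) :
    cdelta n c (k+1) = cdelta n c k * ((1 - ((n (k+1) : ℝ) - 1) * c (k+1)) / (n (k+1) : ℝ)) := by
  unfold cdelta
  rw [Finset.prod_Icc_succ_top (Nat.succ_le_succ (Nat.zero_le k))]

lemma factor_pos (h : CantorParams n c) {k : ℕ} (hk : 1 ≤ k) :
    0 < (1 - ((n k : ℝ) - 1) * c k) / (n k : ℝ) := by
  obtain ⟨h2, hc0, hc1, hnc⟩ := h k hk
  have hn : (2:ℝ) ≤ (n k : ℝ) := by exact_mod_cast h2
  apply div_pos (by linarith) (by linarith)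

lemma factor_le_half (h : CantorParams n c) {k : ℕ} (hk : 1 ≤ k) :
    (1 - ((n k : ℝ) - 1) * c k) / (n k : ℝ) ≤ 1/2 := by
  obtain ⟨h2, hc0, hc1, hnc⟩ := h k hk
  have hn : (2:ℝ) ≤ (n k : ℝ) := by exact_mod_cast h2
  rw [div_le_div_iff₀ (by linarith) (by norm_num)]
  nlinarith

lemma cdelta_pos (h : CantorParams n c) (k : ℕ) : 0 < cdelta n c k := by
  induction k with
  | zero => simp [cdelta_zero]
  | succ m ih =>
    rw [cdelta_succ]
    exact mul_pos ih (factor_pos h (Nat.succ_le_succ (Nat.zero_le m)))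

lemma cdelta_succ_le_half (h : CantorParams n c) (k : ℕ) :
    cdelta n c (k+1) ≤ cdelta n c k / 2 := by
  rw [cdelta_succ]
  have := factor_le_half h (Nat.succ_le_succ (Nat.zero_le k))
  have hpos := cdelta_pos h k
  nlinarith

lemma cdelta_succ_le (h : CantorParams n c) (k : ℕ) :
    cdelta n c (k+1) ≤ cdelta n c k := by
  have := cdelta_succ_le_half h k
  have := cdelta_pos h k
  linarith

lemma cdelta_anti (h : CantorParams n c) {j k : ℕ} (hjk : j ≤ k) :
    cdelta n c k ≤ cdelta n c j := by
  induction k with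
  | zero => simp_all
  | succ m ih =>
    rcases Nat.lt_or_ge j (m+1) with hj | hj
    · exact le_trans (cdelta_succ_le h m) (ih (Nat.lt_succ_iff.mp hj))
    · have : j = m + 1 := le_antisymm hjk hj
      simp [this]

lemma cdelta_le_pow (h : CantorParams n c) (k : ℕ) : cdelta n c k ≤ (1/2)^k := by
  induction k with
  | zero => simp [cdelta_zero]
  | succ m ih =>
    calc cdelta n c (m+1) ≤ cdelta n c m / 2 := cdelta_succ_le_half h m
    _ ≤ (1/2)^m / 2 := by linarith
    _ = (1/2)^(m+1) := by ring

lemma ceps_succ (k : ℕ) : ceps n c (k+1) = c (k+1) * cdelta n c k := by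
  simp [ceps]

lemma ceps_pos (h : CantorParams n c) {k : ℕ} (hk : 1 ≤ k) : 0 < ceps n c k := by
  obtain ⟨m, rfl⟩ := Nat.exists_eq_add_of_le hk
  rw [Nat.add_comm, ceps_succ]
  exact mul_pos (h (m+1) (by omega)).2.1 (cdelta_pos h m)

/-- Key identity: `n_{k+1} δ_{k+1} + (n_{k+1} - 1) ε_{k+1} = δ_k`. -/
lemma cdelta_identity (h : CantorParams n c) (k : ℕ) :
    (n (k+1) : ℝ) * cdelta n c (k+1) + ((n (k+1) : ℝ) - 1) * ceps n c (k+1) = cdelta n c k := by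
  have h2 := (h (k+1) (by omega)).1
  have hn : (0:ℝ) < (n (k+1) : ℝ) := by
    have : (2:ℝ) ≤ (n (k+1) : ℝ) := by exact_mod_cast h2
    linarith
  rw [cdelta_succ, ceps_succ]
  field_simp
  ring

end Geometry
section Geometry2
variable {n : ℕ → ℕ} {c : ℕ → ℝ}

lemma cdelta_identity' (h : CantorParams n c) (k : ℕ) :
    ((n (k+1) : ℝ) - 1) * (cdelta n c (k+1) + ceps n c (k+1)) + cdelta n c (k+1) = cdelta n c k := by
  have := cdelta_identity h k
  ring_nf
  ring_nf at this
  linarith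

lemma step_le (h : CantorParams n c) (k : ℕ) :
    cdelta n c (k+1) + ceps n c (k+1) ≤ cdelta n c k := by
  have hid := cdelta_identity' h k
  have h2 := (h (k+1) (by omega)).1
  have hn : (2:ℝ) ≤ (n (k+1) : ℝ) := by exact_mod_cast h2
  have hd := cdelta_pos h (k+1)
  have he := ceps_pos h (Nat.succ_le_succ (Nat.zero_le k))
  nlinarith

lemma leftpt_zero (w : ℕ → ℕ) : leftpt n c w 0 = 0 := by
  simp [leftpt]

lemma leftpt_succ (w : ℕ → ℕ) (k : ℕ) :
    leftpt n c w (k+1) =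
      leftpt n c w k + ((w (k+1) : ℝ) - 1) * (cdelta n c (k+1) + ceps n c (k+1)) := by
  unfold leftpt
  rw [Finset.sum_Icc_succ_top (Nat.succ_le_succ (Nat.zero_le k))]

lemma leftpt_congr {w w' : ℕ → ℕ} (k : ℕ) (hww' : ∀ j, 1 ≤ j → j ≤ k → w j = w' j) :
    leftpt n c w k = leftpt n c w' k := by
  unfold leftpt
  apply Finset.sum_congr rfl
  intro j hj
  rw [Finset.mem_Icc] at hj
  rw [hww' j hj.1 hj.2]

lemma cInt_congr {w w' : ℕ → ℕ} (k : ℕ) (hww' : ∀ j, 1 ≤ j → j ≤ k → w j = w' j) :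
    cInt n c w k = cInt n c w' k := by
  unfold cInt
  rw [leftpt_congr (n := n) (c := c) k hww']

lemma cInt_subset_succ (h : CantorParams n c) {w : ℕ → ℕ} {k : ℕ} (hw : IsWord n w (k+1)) :
    cInt n c w (k+1) ⊆ cInt n c w k := by
  obtain ⟨hw1, hw2⟩ := hw (k+1) (by omega) (le_refl _)
  have hs : 0 ≤ cdelta n c (k+1) + ceps n c (k+1) := by
    have := cdelta_pos h (k+1)
    have := ceps_pos h (Nat.succ_le_succ (Nat.zero_le k))
    linarith
  have hl := leftpt_succ (n := n) (c := c) w k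
  have hid := cdelta_identity' h k
  have hw1' : (1:ℝ) ≤ (w (k+1) : ℝ) := by exact_mod_cast hw1
  have hw2' : ((w (k+1) : ℝ)) ≤ (n (k+1) : ℝ) := by exact_mod_cast hw2
  apply Set.Icc_subset_Icc
  · nlinarith
  · nlinarith
lemma cInt_subset (h : CantorParams n c) {w : ℕ → ℕ} {j k : ℕ} (hjk : j ≤ k)
    (hw : IsWord n w k) : cInt n c w k ⊆ cInt n c w j := by
  induction k with
  | zero => simp_all
  | succ m ih =>
    rcases Nat.lt_or_ge j (m+1) with hj | hj
    · exact le_trans (cInt_subset_succ h hw)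
        (ih (Nat.lt_succ_iff.mp hj) (fun t ht1 ht2 => hw t ht1 (by omega)))
    · have : j = m + 1 := le_antisymm hjk hj
      simp [this]

lemma telescope (h : CantorParams n c) (j₀ k : ℕ) (hjk : j₀ ≤ k) :
    ∑ j ∈ Finset.Ioc j₀ k, ((n j : ℝ) - 1) * (cdelta n c j + ceps n c j) =
      cdelta n c j₀ - cdelta n c k := by
  induction k, hjk using Nat.le_induction with
  | base => simp
  | succ m hm ih =>
    rw [Finset.sum_Ioc_succ_top (by omega), ih]
    have := cdelta_identity' h m
    linarith

lemma mem_cInt_isword {w : ℕ → ℕ} {k : ℕ} {x : ℝ} (hx : x ∈ cInt n c w k) :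
    leftpt n c w k ≤ x ∧ x ≤ leftpt n c w k + cdelta n c k := hx

/-- Separation: if two words first differ at position `j₀` with `w j₀ < w' j₀`, the
component of `w'` lies at distance at least `ε_{j₀}` to the right of that of `w`. -/
lemma sep (h : CantorParams n c) {w w' : ℕ → ℕ} {k j₀ : ℕ}
    (hw : IsWord n w k) (hw' : IsWord n w' k) (h1 : 1 ≤ j₀) (h2 : j₀ ≤ k)
    (hagree : ∀ j, 1 ≤ j → j < j₀ → w j = w' j) (hlt : w j₀ < w' j₀) :
    leftpt n c w k + cdelta n c k + ceps n c j₀ ≤ leftpt n c w' k := by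
  have key : leftpt n c w' k - leftpt n c w k =
      ∑ j ∈ Finset.Icc j₀ k, ((w' j : ℝ) - (w j : ℝ)) * (cdelta n c j + ceps n c j) := by
    unfold leftpt
    rw [← Finset.sum_sub_distrib]
    rw [← Finset.sum_subset (Finset.Icc_subset_Icc h1 (le_refl k))]
    · apply Finset.sum_congr rfl; intro j _; ring
    · intro j hj hj'
      rw [Finset.mem_Icc] at hj hj'
      have : w j = w' j := hagree j hj.1 (by omega)
      rw [this]; ring
  rw [Finset.Icc_eq_cons_Ioc h2, Finset.sum_cons] at key
  have hlow : ∀ j ∈ Finset.Ioc j₀ k, (-(((n j : ℝ) - 1) * (cdelta n c j + ceps n c j))) ≤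
      ((w' j : ℝ) - (w j : ℝ)) * (cdelta n c j + ceps n c j) := by
    intro j hj
    rw [Finset.mem_Ioc] at hj
    have hj1 : 1 ≤ j := by omega
    have hwj := hw j hj1 hj.2
    have hw'j := hw' j hj1 hj.2
    have hs : 0 ≤ cdelta n c j + ceps n c j := by
      have := cdelta_pos h j
      have := ceps_pos h hj1
      linarith
    have : (1 : ℝ) - (n j : ℝ) ≤ (w' j : ℝ) - (w j : ℝ) := by
      have : (w' j : ℝ) ≥ 1 := by exact_mod_cast hw'j.1
      have : (w j : ℝ) ≤ (n j : ℝ) := by exact_mod_cast hwj.2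
      have h1' : (1:ℝ) ≤ (w' j : ℝ) := by exact_mod_cast hw'j.1
      linarith
    nlinarith
  have hsum := Finset.sum_le_sum hlow
  rw [Finset.sum_neg_distrib, telescope h j₀ k h2] at hsum
  have hsj : 0 < cdelta n c j₀ + ceps n c j₀ := by
    have := cdelta_pos h j₀
    have := ceps_pos h h1
    linarith
  have hstep : (1:ℝ) ≤ (w' j₀ : ℝ) - (w j₀ : ℝ) := by
    have : w j₀ + 1 ≤ w' j₀ := hlt
    have := (Nat.cast_le (α := ℝ)).mpr this
    push_cast at this
    linarith
  have hd : 0 < cdelta n c k := cdelta_pos h k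
  have hdj : cdelta n c k ≤ cdelta n c j₀ := cdelta_anti h h2
  have hfirst : (cdelta n c j₀ + ceps n c j₀) ≤
      ((w' j₀ : ℝ) - (w j₀ : ℝ)) * (cdelta n c j₀ + ceps n c j₀) := by
    nlinarith
  nlinarith [key]

end Geometry2
section Words
variable {n : ℕ → ℕ} {c : ℕ → ℝ}

open scoped Classical in
/-- Canonical finite set of words of length `k`. -/
noncomputable def wordFinset (n : ℕ → ℕ) (k : ℕ) : Finset (ℕ → ℕ) :=
  ((Finset.Icc 1 k).pi (fun j => Finset.Icc 1 (n j))).image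
    (fun f j => if hj : j ∈ Finset.Icc 1 k then f j hj else 1)

lemma mem_wordFinset {w : ℕ → ℕ} {k : ℕ} :
    w ∈ wordFinset n k ↔ IsWord n w k ∧ ∀ j, j ∉ Finset.Icc 1 k → w j = 1 := by
  classical
  constructor
  · intro hw
    rw [wordFinset, Finset.mem_image] at hw
    obtain ⟨f, hf, rfl⟩ := hw
    rw [Finset.mem_pi] at hf
    constructor
    · intro j hj1 hj2
      have hmem : j ∈ Finset.Icc 1 k := Finset.mem_Icc.mpr ⟨hj1, hj2⟩
      have := hf j hmem
      rw [Finset.mem_Icc] at this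
      simpa [hmem] using this
    · intro j hj
      simp [hj]
  · rintro ⟨hw, hout⟩
    rw [wordFinset, Finset.mem_image]
    refine ⟨fun j _ => w j, ?_, ?_⟩
    · rw [Finset.mem_pi]
      intro j hj
      rw [Finset.mem_Icc] at hj ⊢
      exact hw j hj.1 hj.2
    · funext j
      by_cases hj : j ∈ Finset.Icc 1 k
      · simp [hj]
      · simp [hj, hout j hj]

lemma wordFinset_isWord {w : ℕ → ℕ} {k : ℕ} (hw : w ∈ wordFinset n k) : IsWord n w k :=
  (mem_wordFinset.mp hw).1

/-- Canonical truncation of a word. -/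
def truncWord (w : ℕ → ℕ) (k : ℕ) : ℕ → ℕ := fun j => if 1 ≤ j ∧ j ≤ k then w j else 1

lemma truncWord_mem {w : ℕ → ℕ} {k m : ℕ} (hw : IsWord n w m) (hkm : k ≤ m) :
    truncWord w k ∈ wordFinset n k := by
  rw [mem_wordFinset]
  constructor
  · intro j hj1 hj2
    simp only [truncWord, if_pos (And.intro hj1 hj2)]
    exact hw j hj1 (le_trans hj2 hkm)
  · intro j hj
    rw [Finset.mem_Icc] at hj
    simp only [truncWord, if_neg (by omega : ¬(1 ≤ j ∧ j ≤ k))]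

lemma truncWord_agree (w : ℕ → ℕ) (k : ℕ) : ∀ j, 1 ≤ j → j ≤ k → truncWord w k j = w j := by
  intro j hj1 hj2
  simp [truncWord, hj1, hj2]

lemma levelSet_eq (k : ℕ) :
    levelSet n c k = ⋃ w ∈ wordFinset n k, cInt n c w k := by
  apply Set.Subset.antisymm
  · intro x hx
    rw [levelSet, Set.mem_iUnion₂] at hx
    obtain ⟨w, hw, hx⟩ := hx
    rw [Set.mem_iUnion₂]
    refine ⟨truncWord w k, truncWord_mem hw (le_refl k), ?_⟩
    rwa [cInt_congr (n := n) (c := c) k (fun j h1 h2 => (truncWord_agree w k j h1 h2))]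
  · intro x hx
    rw [Set.mem_iUnion₂] at hx
    obtain ⟨w, hw, hx⟩ := hx
    rw [levelSet, Set.mem_iUnion₂]
    exact ⟨w, wordFinset_isWord hw, hx⟩

lemma measurable_levelSet (k : ℕ) : MeasurableSet (levelSet n c k) := by
  rw [levelSet_eq]
  exact (wordFinset n k).measurableSet_biUnion (fun w _ => measurableSet_Icc)

lemma measurable_E : MeasurableSet (uniformCantorSet n c) :=
  MeasurableSet.iInter (fun k => measurable_levelSet k)

lemma cInt_zero (w : ℕ → ℕ) : cInt n c w 0 = Set.Icc 0 1 := by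
  rw [cInt, leftpt_zero, cdelta_zero]
  norm_num

lemma E_subset_Icc : uniformCantorSet n c ⊆ Set.Icc 0 1 := by
  intro x hx
  have hx0 : x ∈ levelSet n c 0 := Set.mem_iInter.mp hx 0
  rw [levelSet, Set.mem_iUnion₂] at hx0
  obtain ⟨w, _, hx0⟩ := hx0
  rwa [cInt_zero] at hx0

/-- Distance separation between components of distinct canonical words. -/
lemma sep_dist (h : CantorParams n c) {w w' : ℕ → ℕ} {k : ℕ}
    (hw : IsWord n w k) (hw' : IsWord n w' k)
    (hne : ∃ j, 1 ≤ j ∧ j ≤ k ∧ w j ≠ w' j) :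
    ∃ j₀, 1 ≤ j₀ ∧ j₀ ≤ k ∧
      ∀ x ∈ cInt n c w k, ∀ y ∈ cInt n c w' k, ceps n c j₀ ≤ |x - y| := by
  classical
  set j₀ := Nat.find hne with hj₀def
  obtain ⟨h1, h2, hne'⟩ := Nat.find_spec hne
  rw [← hj₀def] at hne' h1 h2
  have hagree : ∀ j, 1 ≤ j → j < j₀ → w j = w' j := by
    intro j hj1 hj2
    by_contra hc
    exact Nat.find_min hne hj2 ⟨hj1, by omega, hc⟩
  refine ⟨j₀, h1, h2, ?_⟩
  have hεp : 0 < ceps n c j₀ := ceps_pos h h1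
  intro x hx y hy
  rcases Nat.lt_or_ge (w j₀) (w' j₀) with hlt | hge
  · have := sep h hw hw' h1 h2 hagree hlt
    obtain ⟨hx1, hx2⟩ := mem_cInt_isword hx
    obtain ⟨hy1, hy2⟩ := mem_cInt_isword hy
    rw [abs_sub_comm, abs_of_nonneg (by linarith)]
    linarith
  · have hlt : w' j₀ < w j₀ := by omega
    have := sep h hw' hw h1 h2 (fun j a b => (hagree j a b).symm) hlt
    obtain ⟨hx1, hx2⟩ := mem_cInt_isword hx
    obtain ⟨hy1, hy2⟩ := mem_cInt_isword hy
    rw [abs_of_nonneg (by linarith)]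
    linarith

/-- Distinct canonical words have disjoint components. -/
lemma cInt_disjoint (h : CantorParams n c) {w w' : ℕ → ℕ} {k : ℕ}
    (hw : w ∈ wordFinset n k) (hw' : w' ∈ wordFinset n k) (hne : w ≠ w') :
    Disjoint (cInt n c w k) (cInt n c w' k) := by
  rw [Set.disjoint_left]
  intro x hx hx'
  have hex : ∃ j, 1 ≤ j ∧ j ≤ k ∧ w j ≠ w' j := by
    by_contra hc
    push_neg at hc
    apply hne
    funext j
    by_cases hj : j ∈ Finset.Icc 1 k
    · rw [Finset.mem_Icc] at hj
      exact hc j hj.1 hj.2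
    · rw [(mem_wordFinset.mp hw).2 j hj, (mem_wordFinset.mp hw').2 j hj]
  obtain ⟨j₀, hj1, hj2, hd⟩ := sep_dist h (wordFinset_isWord hw) (wordFinset_isWord hw') hex
  have := hd x hx x hx'
  have := ceps_pos h hj1
  simp at *
  linarith

end Words
section MeasureLemmas
variable {n : ℕ → ℕ} {c : ℕ → ℝ} {p : ℕ → ℕ → ℝ} {μ : Measure ℝ}

lemma mu_inter_E (hμ : MatchingMeasure n c p μ) (A : Set ℝ) :
    μ (A ∩ uniformCantorSet n c) = μ A := by
  refine le_antisymm (measure_mono Set.inter_subset_left) ?_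
  calc μ A ≤ μ (A ∩ uniformCantorSet n c) + μ (A \ uniformCantorSet n c) :=
        measure_le_inter_add_diff μ A _
    _ ≤ μ (A ∩ uniformCantorSet n c) + μ (uniformCantorSet n c)ᶜ := by
        gcongr
        exact Set.diff_subset_compl A _
    _ = μ (A ∩ uniformCantorSet n c) := by rw [hμ.2.1, add_zero]

lemma mu_Icc01 (hμ : MatchingMeasure n c p μ) : μ (Set.Icc (0:ℝ) 1) = 1 := by
  have h1 : μ (Set.Icc (0:ℝ) 1) ≤ 1 := hμ.1.measure_univ ▸ measure_mono (Set.subset_univ _)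
  have h2 : (1:ℝ≥0∞) ≤ μ (Set.Icc (0:ℝ) 1) := by
    rw [← hμ.1.measure_univ, ← mu_inter_E hμ Set.univ]
    exact measure_mono (fun x hx => E_subset_Icc hx.2)
  exact le_antisymm h1 h2

/-- The measure of a level-`k` component is the product of the `p`'s along the word. -/
lemma mu_cInt (hμ : MatchingMeasure n c p μ) {w : ℕ → ℕ} {k : ℕ} (hw : IsWord n w k)
    (hp : MatchingSeq n p) :
    μ (cInt n c w k) = ENNReal.ofReal (∏ j ∈ Finset.Icc 1 k, p j (w j)) := by
  induction k with
  | zero =>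
    rw [cInt_zero, mu_Icc01 hμ]
    simp
  | succ m ih =>
    have hwm : IsWord n w m := fun j h1 h2 => hw j h1 (by omega)
    have hbd := hw (m+1) (by omega) (le_refl _)
    have hrec := hμ.2.2 (m+1) (by omega) w (by simpa using hwm) (w (m+1)) hbd.1 hbd.2
    rw [Function.update_eq_self] at hrec
    have hm1 : (m + 1) - 1 = m := by omega
    rw [hm1] at hrec
    rw [hrec, ih hwm, ← ENNReal.ofReal_mul (le_of_lt ((hp (m+1) (by omega)).1 _ hbd.1 hbd.2)),
      Finset.prod_Icc_succ_top (Nat.succ_le_succ (Nat.zero_le m))]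
    ring_nf

lemma prod_p_pos (hp : MatchingSeq n p) {w : ℕ → ℕ} {k : ℕ} (hw : IsWord n w k) :
    0 < ∏ j ∈ Finset.Icc 1 k, p j (w j) := by
  apply Finset.prod_pos
  intro j hj
  rw [Finset.mem_Icc] at hj
  exact (hp j hj.1).1 _ (hw j hj.1 hj.2).1 (hw j hj.1 hj.2).2

end MeasureLemmas

section Counting

/-- Upper bound for the number of naturals in an open real interval. -/
lemma card_le_interval {S : Finset ℕ} {α β : ℝ} (hαβ : α ≤ β)
    (hS : ∀ i ∈ S, α < (i:ℝ) ∧ (i:ℝ) < β) : (S.card : ℝ) ≤ β - α + 1 := by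
  classical
  have hsub : S.image (Nat.cast : ℕ → ℤ) ⊆ Finset.Ioo ⌊α⌋ ⌈β⌉ := by
    intro z hz
    rw [Finset.mem_image] at hz
    obtain ⟨i, hi, rfl⟩ := hz
    obtain ⟨h1, h2⟩ := hS i hi
    rw [Finset.mem_Ioo]
    exact ⟨Int.floor_lt.mpr (by exact_mod_cast h1), Int.lt_ceil.mpr (by exact_mod_cast h2)⟩
  have hcard : S.card ≤ (Finset.Ioo ⌊α⌋ ⌈β⌉).card := by
    rw [← Finset.card_image_of_injective S
      (Nat.cast_injective : Function.Injective (Nat.cast : ℕ → ℤ))]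
    exact Finset.card_le_card hsub
  rw [Int.card_Ioo] at hcard
  have h3 : (⌈β⌉:ℝ) < β + 1 := Int.ceil_lt_add_one β
  have h4 : α - 1 < (⌊α⌋:ℝ) := Int.sub_one_lt_floor α
  rcases le_or_gt (⌈β⌉ - ⌊α⌋ - 1) 0 with hc | hc
  · rw [Int.toNat_of_nonpos hc] at hcard
    have : S.card = 0 := by omega
    rw [this]
    push_cast
    linarith
  · have htn : ((⌈β⌉ - ⌊α⌋ - 1).toNat : ℤ) = ⌈β⌉ - ⌊α⌋ - 1 := Int.toNat_of_nonneg (le_of_lt hc)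
    have hcast : ((S.card : ℤ) : ℝ) ≤ (((⌈β⌉ - ⌊α⌋ - 1).toNat : ℤ) : ℝ) := by
      exact_mod_cast hcard
    rw [htn] at hcast
    push_cast at hcast ⊢
    linarith

/-- Lower bound for the number of naturals in an open real interval. -/
lemma interval_le_card {S : Finset ℕ} {α β : ℝ} (hα : -1 ≤ α)
    (hS : ∀ z : ℕ, α < (z:ℝ) → (z:ℝ) < β → z ∈ S) : β - α - 1 ≤ (S.card : ℝ) := by
  classical
  rcases le_or_gt β (α + 1) with hc | hc
  · have h0 : (0:ℝ) ≤ S.card := Nat.cast_nonneg _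
    linarith
  have hfl : (-1:ℤ) ≤ ⌊α⌋ := by
    rw [Int.le_floor]; push_cast; exact hα
  have hsub : (Finset.Ioo ⌊α⌋ ⌈β⌉).image Int.toNat ⊆ S := by
    intro z hz
    rw [Finset.mem_image] at hz
    obtain ⟨y, hy, rfl⟩ := hz
    rw [Finset.mem_Ioo] at hy
    have hy0 : 0 ≤ y := by omega
    have hcast : ((y.toNat : ℕ) : ℝ) = ((y:ℤ) : ℝ) := by
      exact_mod_cast congrArg (fun t : ℤ => (t : ℝ)) (Int.toNat_of_nonneg hy0)
    apply hS
    · rw [hcast]; exact Int.floor_lt.mp hy.1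
    · rw [hcast]
      have h5 : ((y:ℝ)) + 1 ≤ (⌈β⌉:ℝ) := by exact_mod_cast hy.2
      have h6 : (⌈β⌉:ℝ) < β + 1 := Int.ceil_lt_add_one β
      linarith
  have hinj : Set.InjOn Int.toNat (Finset.Ioo ⌊α⌋ ⌈β⌉) := by
    intro a ha b hb hab
    rw [Finset.coe_Ioo, Set.mem_Ioo] at ha hb
    have ha0 : 0 ≤ a := by omega
    have hb0 : 0 ≤ b := by omega
    omega
  have hcard : (Finset.Ioo ⌊α⌋ ⌈β⌉).card ≤ S.card := by
    rw [← Finset.card_image_of_injOn hinj]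
    exact Finset.card_le_card hsub
  rw [Int.card_Ioo] at hcard
  have h7 : β ≤ (⌈β⌉:ℝ) := Int.le_ceil β
  have h8 : (⌊α⌋:ℝ) ≤ α := Int.floor_le α
  have hpos : 0 ≤ ⌈β⌉ - ⌊α⌋ - 1 := by
    by_contra hcc
    push_neg at hcc
    have : ((⌈β⌉:ℝ)) - (⌊α⌋:ℝ) - 1 < 0 := by exact_mod_cast hcc
    linarith
  have hcast2 : (((⌈β⌉ - ⌊α⌋ - 1).toNat : ℤ) : ℝ) ≤ ((S.card : ℤ) : ℝ) := by exact_mod_cast hcard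
  rw [Int.toNat_of_nonneg hpos] at hcast2
  push_cast at hcast2 ⊢
  linarith

end Counting
section Geometry3
variable {n : ℕ → ℕ} {c : ℕ → ℝ}

lemma comp_subset_ball (h : CantorParams n c) {w : ℕ → ℕ} {k : ℕ} {x ρ : ℝ}
    (hx : x ∈ cInt n c w k) (hρ : cdelta n c k < ρ) : cInt n c w k ⊆ Metric.ball x ρ := by
  intro y hy
  obtain ⟨hx1, hx2⟩ := mem_cInt_isword hx
  obtain ⟨hy1, hy2⟩ := mem_cInt_isword hy
  rw [Metric.mem_ball, Real.dist_eq, abs_lt]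
  constructor <;> linarith

lemma exists_comp {x : ℝ} (hx : x ∈ uniformCantorSet n c) (k : ℕ) :
    ∃ w ∈ wordFinset n k, x ∈ cInt n c w k := by
  have hk : x ∈ levelSet n c k := Set.mem_iInter.mp hx k
  rw [levelSet_eq, Set.mem_iUnion₂] at hk
  obtain ⟨w, hw, hxw⟩ := hk
  exact ⟨w, hw, hxw⟩

lemma comp_unique (h : CantorParams n c) {w w' : ℕ → ℕ} {k : ℕ} {x : ℝ}
    (hw : w ∈ wordFinset n k) (hw' : w' ∈ wordFinset n k)
    (hx : x ∈ cInt n c w k) (hx' : x ∈ cInt n c w' k) : w = w' := by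
  by_contra hne
  exact Set.disjoint_left.mp (cInt_disjoint h hw hw' hne) hx hx'

lemma truncWord_wordFinset {w : ℕ → ℕ} {k K : ℕ} (hw : w ∈ wordFinset n k) (hK : K ≤ k) :
    truncWord w K ∈ wordFinset n K :=
  truncWord_mem (wordFinset_isWord hw) hK

lemma cInt_subset_trunc (h : CantorParams n c) {w : ℕ → ℕ} {k K : ℕ}
    (hw : IsWord n w k) (hK : K ≤ k) :
    cInt n c w k ⊆ cInt n c (truncWord w K) K := by
  have := cInt_congr (n := n) (c := c) K (fun j a b => truncWord_agree w K j a b)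
  rw [this]
  exact cInt_subset h hK hw

lemma isWord_update {w : ℕ → ℕ} {k i : ℕ} (hw : IsWord n w k)
    (hi1 : 1 ≤ i) (hi2 : i ≤ n (k+1)) : IsWord n (Function.update w (k+1) i) (k+1) := by
  intro j hj1 hj2
  rcases Nat.lt_or_ge j (k+1) with hj | hj
  · rw [Function.update_of_ne (by omega)]
    exact hw j hj1 (by omega)
  · have : j = k + 1 := by omega
    subst this
    rw [Function.update_self]
    exact ⟨hi1, hi2⟩

lemma update_mem_wordFinset {w : ℕ → ℕ} {k i : ℕ} (hw : w ∈ wordFinset n k)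
    (hi1 : 1 ≤ i) (hi2 : i ≤ n (k+1)) :
    Function.update w (k+1) i ∈ wordFinset n (k+1) := by
  rw [mem_wordFinset]
  obtain ⟨hw1, hw2⟩ := mem_wordFinset.mp hw
  refine ⟨isWord_update hw1 hi1 hi2, ?_⟩
  intro j hj
  rw [Finset.mem_Icc] at hj
  rw [Function.update_of_ne (by omega)]
  exact hw2 j (by rw [Finset.mem_Icc]; omega)

lemma leftpt_update (w : ℕ → ℕ) (k i : ℕ) :
    leftpt n c (Function.update w (k+1) i) (k+1) =
      leftpt n c w k + ((i:ℝ) - 1) * (cdelta n c (k+1) + ceps n c (k+1)) := by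
  rw [leftpt_succ, Function.update_self,
    leftpt_congr (n := n) (c := c) k
      (fun j a b => (Function.update_of_ne (by omega) i w : Function.update w (k+1) i j = w j))]

lemma eq_update_self {w : ℕ → ℕ} {k : ℕ} (hw : w ∈ wordFinset n (k+1)) :
    w = Function.update (truncWord w k) (k+1) (w (k+1)) := by
  funext j
  rcases eq_or_ne j (k+1) with rfl | hj
  · rw [Function.update_self]
  · rw [Function.update_of_ne hj]
    unfold truncWord
    by_cases hjk : 1 ≤ j ∧ j ≤ k
    · rw [if_pos hjk]
    · rw [if_neg hjk]
      exact (mem_wordFinset.mp hw).2 j (by rw [Finset.mem_Icc]; omega)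

/-- Volume-based counting of disjoint components meeting an interval. -/
lemma card_vol (h : CantorParams n c) {k : ℕ} {G : Finset (ℕ → ℕ)} (hG : G ⊆ wordFinset n k)
    {a b : ℝ} (hab : a ≤ b)
    (hmeet : ∀ w ∈ G, ((cInt n c w k) ∩ Set.Ioo a b).Nonempty) :
    (G.card : ℝ) * cdelta n c k ≤ (b - a) + 2 * cdelta n c k := by
  classical
  have hδ := cdelta_pos h k
  have hsub : ∀ w ∈ G, cInt n c w k ⊆ Set.Ioo (a - cdelta n c k) (b + cdelta n c k) := by
    intro w hw y hy
    obtain ⟨t, ht, ht'⟩ := hmeet w hw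
    obtain ⟨ht1, ht2⟩ := mem_cInt_isword ht
    obtain ⟨hy1, hy2⟩ := mem_cInt_isword hy
    rw [Set.mem_Ioo] at ht' ⊢
    constructor <;> [linarith [ht'.1]; linarith [ht'.2]]
  have hdisj : (G : Set (ℕ → ℕ)).PairwiseDisjoint (fun w => cInt n c w k) := by
    intro w hw w' hw' hne
    exact cInt_disjoint h (hG hw) (hG hw') hne
  have hvol : volume (⋃ w ∈ G, cInt n c w k) = ∑ w ∈ G, volume (cInt n c w k) :=
    measure_biUnion_finset hdisj (fun w _ => measurableSet_Icc)
  have hle : volume (⋃ w ∈ G, cInt n c w k) ≤ ENNReal.ofReal (b - a + 2 * cdelta n c k) := by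
    have h1 : volume (⋃ w ∈ G, cInt n c w k) ≤
        volume (Set.Ioo (a - cdelta n c k) (b + cdelta n c k)) :=
      measure_mono (Set.iUnion₂_subset hsub)
    rw [Real.volume_Ioo] at h1
    refine h1.trans (le_of_eq ?_)
    congr 1
    ring
  have hveq : ∀ w ∈ G, volume (cInt n c w k) = ENNReal.ofReal (cdelta n c k) := by
    intro w _
    rw [cInt, Real.volume_Icc]
    ring_nf
  rw [hvol, Finset.sum_congr rfl hveq, Finset.sum_const, nsmul_eq_mul] at hle
  have : ENNReal.ofReal ((G.card : ℝ) * cdelta n c k) ≤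
      ENNReal.ofReal (b - a + 2 * cdelta n c k) := by
    rw [ENNReal.ofReal_mul (Nat.cast_nonneg _), ENNReal.ofReal_natCast]
    exact hle
  rwa [ENNReal.ofReal_le_ofReal_iff (by linarith)] at this
end Geometry3
set_option maxHeartbeats 2000000 in
theorem stmt16 (n : ℕ → ℕ) (c : ℕ → ℝ) (p : ℕ → ℕ → ℝ) (μ : Measure ℝ)
    (h : CantorParams n c) (hp : MatchingSeq n p)
    (huni : ∃ k₀, 1 ≤ k₀ ∧ ∀ k, k₀ ≤ k → ∀ i, 1 ≤ i → i ≤ n k → p k i = 1 / (n k : ℝ))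
    (hμ : MatchingMeasure n c p μ) :
    ∃ D : ℝ≥0∞, 1 ≤ D ∧ D < ⊤ ∧ DoublingOn μ (uniformCantorSet n c) D := by
  classical
  obtain ⟨k₀, hk₀1, hu⟩ := huni
  obtain ⟨K, rfl⟩ : ∃ K, k₀ = K + 1 := ⟨k₀ - 1, by omega⟩
  -- the uniform tail products
  set u : ℕ → ℝ := fun k => ∏ j ∈ Finset.Ioc K k, (1 / (n j : ℝ)) with hu_def
  have hu_pos : ∀ k, 0 < u k := by
    intro k
    apply Finset.prod_pos
    intro j hj
    rw [Finset.mem_Ioc] at hj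
    have h2 := (h j (by omega)).1
    have h3 : (2:ℝ) ≤ (n j : ℝ) := by exact_mod_cast h2
    exact one_div_pos.mpr (by linarith)
  -- measure of any level-k component, k ≥ K
  have hmu : ∀ k, K ≤ k → ∀ w : ℕ → ℕ, IsWord n w k →
      μ (cInt n c w k) = ENNReal.ofReal ((∏ j ∈ Finset.Icc 1 K, p j (w j)) * u k) := by
    intro k hk w hw
    rw [mu_cInt hμ hw hp]
    congr 1
    have h1 : Finset.Icc 1 k = Finset.Ioc 0 k := Finset.Icc_add_one_left_eq_Ioc 0 k
    have h2 : Finset.Icc 1 K = Finset.Ioc 0 K := Finset.Icc_add_one_left_eq_Ioc 0 K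
    rw [h1, h2, ← Finset.prod_Ioc_consecutive _ (Nat.zero_le K) hk]
    congr 1
    rw [hu_def]
    apply Finset.prod_congr rfl
    intro j hj
    rw [Finset.mem_Ioc] at hj
    exact hu j (by omega) (w j) (hw j (by omega) hj.2).1 (hw j (by omega) hj.2).2
  -- minimal level-K component measure
  have hWK : (wordFinset n K).Nonempty := by
    refine ⟨fun _ => 1, mem_wordFinset.mpr ⟨?_, fun j _ => rfl⟩⟩
    intro j hj1 hj2
    refine ⟨le_refl 1, ?_⟩
    show 1 ≤ n j
    have := (h j hj1).1
    omega
  set m : ℝ := ((wordFinset n K).image (fun w => ∏ j ∈ Finset.Icc 1 K, p j (w j))).min'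
    (hWK.image _) with hm_def
  have hm_le : ∀ w ∈ wordFinset n K, m ≤ ∏ j ∈ Finset.Icc 1 K, p j (w j) := by
    intro w hw
    exact Finset.min'_le _ _ (Finset.mem_image_of_mem _ hw)
  have hm_pos : 0 < m := by
    have := Finset.min'_mem ((wordFinset n K).image (fun w => ∏ j ∈ Finset.Icc 1 K, p j (w j)))
      (hWK.image _)
    rw [Finset.mem_image] at this
    obtain ⟨w, hw, hweq⟩ := this
    rw [hm_def, ← hweq]
    exact prod_p_pos hp (fun j a b => wordFinset_isWord hw j a b)
  -- minimal gap scale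
  set estar : ℝ := (insert (1:ℝ) ((Finset.Icc 1 K).image (ceps n c))).min'
    (Finset.insert_nonempty _ _) with hes_def
  have hes_le : ∀ j, 1 ≤ j → j ≤ K → estar ≤ ceps n c j := by
    intro j hj1 hj2
    apply Finset.min'_le
    exact Finset.mem_insert_of_mem (Finset.mem_image_of_mem _ (Finset.mem_Icc.mpr ⟨hj1, hj2⟩))
  have hes1 : estar ≤ 1 := Finset.min'_le _ _ (Finset.mem_insert_self _ _)
  have hes_pos : 0 < estar := by
    have hmem := Finset.min'_mem (insert (1:ℝ) ((Finset.Icc 1 K).image (ceps n c)))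
      (Finset.insert_nonempty _ _)
    rw [Finset.mem_insert] at hmem
    rcases hmem with h1 | h2
    · rw [hes_def, h1]; norm_num
    · rw [Finset.mem_image] at h2
      obtain ⟨j, hj, hjeq⟩ := h2
      rw [Finset.mem_Icc] at hj
      rw [hes_def, ← hjeq]
      exact ceps_pos h hj.1
  -- reference deep level for large radii
  obtain ⟨M, hMK, hM⟩ : ∃ M, K ≤ M ∧ cdelta n c M < estar / 2 := by
    obtain ⟨M0, hM0⟩ := exists_pow_lt_of_lt_one (by linarith : (0:ℝ) < estar / 2)
      (by norm_num : (1:ℝ)/2 < 1)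
    refine ⟨max M0 K, le_max_right _ _, ?_⟩
    calc cdelta n c (max M0 K) ≤ cdelta n c M0 := cdelta_anti h (le_max_left _ _)
      _ ≤ (1/2)^M0 := cdelta_le_pow h M0
      _ < estar / 2 := hM0
  set D : ℝ≥0∞ := ENNReal.ofReal 108 + ENNReal.ofReal ((n (K+1) : ℝ)) +
    ENNReal.ofReal ((m * u M)⁻¹) + 1 with hD_def
  have hD1 : 1 ≤ D := le_add_self
  have hDtop : D < ⊤ := by
    rw [hD_def]
    refine ENNReal.add_lt_top.mpr ⟨ENNReal.add_lt_top.mpr ⟨ENNReal.add_lt_top.mpr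
      ⟨ENNReal.ofReal_lt_top, ENNReal.ofReal_lt_top⟩, ENNReal.ofReal_lt_top⟩, ?_⟩
    exact ENNReal.one_lt_top
  have hprob : IsProbabilityMeasure μ := hμ.1
  refine ⟨D, hD1, hDtop, ?_⟩
  intro x hx r hr
  -- the canonical level-K component of x
  obtain ⟨wI, hwI, hxI⟩ := exists_comp hx K
  set PI : ℝ := ∏ j ∈ Finset.Icc 1 K, p j (wI j) with hPI_def
  have hPI_pos : 0 < PI := prod_p_pos hp (fun j a b => wordFinset_isWord hwI j a b)
  have hPIm : m ≤ PI := hm_le wI hwI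
  -- any point of E close to x lies in the same level-K component
  have hsame : ∀ y, y ∈ uniformCantorSet n c → |x - y| < estar → y ∈ cInt n c wI K := by
    intro y hy hxy
    obtain ⟨wy, hwy, hyw⟩ := exists_comp hy K
    rcases eq_or_ne wI wy with rfl | hne
    · exact hyw
    · exfalso
      have hex : ∃ j, 1 ≤ j ∧ j ≤ K ∧ wI j ≠ wy j := by
        by_contra hc
        push_neg at hc
        apply hne
        funext j
        by_cases hj : j ∈ Finset.Icc 1 K
        · rw [Finset.mem_Icc] at hj; exact hc j hj.1 hj.2
        · rw [(mem_wordFinset.mp hwI).2 j hj, (mem_wordFinset.mp hwy).2 j hj]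
      obtain ⟨j₀, hj1, hj2, hd⟩ := sep_dist h (wordFinset_isWord hwI) (wordFinset_isWord hwy) hex
      have := hd x hxI y hyw
      have := hes_le j₀ hj1 hj2
      linarith
  -- positivity of small balls around x
  have hpos_ball : ∀ ρ, 0 < ρ → 0 < μ (Metric.ball x ρ ∩ uniformCantorSet n c) := by
    intro ρ hρ
    obtain ⟨M2, hM2⟩ : ∃ M2, cdelta n c M2 < ρ := by
      obtain ⟨M2, hM2⟩ := exists_pow_lt_of_lt_one hρ (by norm_num : (1:ℝ)/2 < 1)
      exact ⟨M2, lt_of_le_of_lt (cdelta_le_pow h M2) hM2⟩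
    obtain ⟨w, hw, hxw⟩ := exists_comp hx M2
    have hsub : cInt n c w M2 ∩ uniformCantorSet n c ⊆
        Metric.ball x ρ ∩ uniformCantorSet n c :=
      Set.inter_subset_inter_left _ (comp_subset_ball h hxw hM2)
    calc (0:ℝ≥0∞) < μ (cInt n c w M2) := by
          rw [mu_cInt hμ (wordFinset_isWord hw) hp]
          exact ENNReal.ofReal_pos.mpr (prod_p_pos hp (wordFinset_isWord hw))
      _ = μ (cInt n c w M2 ∩ uniformCantorSet n c) := (mu_inter_E hμ _).symm
      _ ≤ μ (Metric.ball x ρ ∩ uniformCantorSet n c) := measure_mono hsub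
  refine ⟨hpos_ball _ (by linarith), ?_, ?_⟩
  swap
  · exact lt_of_le_of_lt (measure_mono (Set.subset_univ _)) (by
      rw [hprob.measure_univ]; exact ENNReal.one_lt_top)
  -- main doubling estimate
  rcases lt_or_ge r (estar/2) with hsmall | hlarge
  · -- small radii
    have h2res : 2 * r < estar := by linarith
    have hballE : Metric.ball x (2*r) ∩ uniformCantorSet n c ⊆ cInt n c wI K := by
      rintro y ⟨hy1, hy2⟩
      apply hsame y hy2
      rw [Metric.mem_ball, Real.dist_eq] at hy1
      rw [abs_sub_comm]
      linarith
    -- measure of components whose level-K ancestor is that of x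
    have hcompPI : ∀ k', K ≤ k' → ∀ w ∈ wordFinset n k',
        (cInt n c w k' ∩ cInt n c wI K).Nonempty →
        μ (cInt n c w k') = ENNReal.ofReal (PI * u k') := by
      intro k' hk' w hw hne
      obtain ⟨y, hy1, hy2⟩ := hne
      have htr : truncWord w K = wI := comp_unique h (truncWord_wordFinset hw hk') hwI
        (cInt_subset_trunc h (wordFinset_isWord hw) hk' hy1) hy2
      rw [hmu k' hk' w (wordFinset_isWord hw)]
      congr 2
      apply Finset.prod_congr rfl
      intro j hj
      rw [Finset.mem_Icc] at hj
      rw [← truncWord_agree w K j hj.1 hj.2, htr]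
    -- minimal level k1+1 ≥ K+1 with component length < r
    have hex : ∃ j, K + 1 ≤ j ∧ cdelta n c j < r := by
      obtain ⟨M2, hM2⟩ := exists_pow_lt_of_lt_one hr (by norm_num : (1:ℝ)/2 < 1)
      refine ⟨max M2 (K+1), le_max_right _ _, ?_⟩
      calc cdelta n c (max M2 (K+1)) ≤ cdelta n c M2 := cdelta_anti h (le_max_left _ _)
        _ ≤ (1/2)^M2 := cdelta_le_pow h M2
        _ < r := hM2
    obtain ⟨k1, hk1⟩ : ∃ k1, Nat.find hex = k1 + 1 := ⟨Nat.find hex - 1, by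
      have := (Nat.find_spec hex).1; omega⟩
    have hkK : K + 1 ≤ k1 + 1 := hk1 ▸ (Nat.find_spec hex).1
    have hkδ : cdelta n c (k1+1) < r := hk1 ▸ (Nat.find_spec hex).2
    have hminlvl : ∀ j, K + 1 ≤ j → j < k1 + 1 → r ≤ cdelta n c j := by
      intro j hjK hjk
      by_contra hc
      push_neg at hc
      have := Nat.find_min' hex (⟨hjK, hc⟩ : K + 1 ≤ j ∧ cdelta n c j < r)
      omega
    -- lower bound from the level-(k1+1) component of x
    obtain ⟨wk, hwk, hxwk⟩ := exists_comp hx (k1+1)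
    have hμwk : μ (cInt n c wk (k1+1)) = ENNReal.ofReal (PI * u (k1+1)) :=
      hcompPI (k1+1) (by omega) wk hwk ⟨x, hxwk, hxI⟩
    have hlow1 : ENNReal.ofReal (PI * u (k1+1)) ≤
        μ (Metric.ball x r ∩ uniformCantorSet n c) := by
      have hsub : cInt n c wk (k1+1) ∩ uniformCantorSet n c ⊆
          Metric.ball x r ∩ uniformCantorSet n c :=
        Set.inter_subset_inter_left _ (comp_subset_ball h hxwk hkδ)
      calc ENNReal.ofReal (PI * u (k1+1)) = μ (cInt n c wk (k1+1)) := hμwk.symm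
        _ = μ (cInt n c wk (k1+1) ∩ uniformCantorSet n c) := (mu_inter_E hμ _).symm
        _ ≤ μ (Metric.ball x r ∩ uniformCantorSet n c) := measure_mono hsub
    rcases Nat.eq_or_lt_of_le (show K ≤ k1 by omega) with hEq | hKlt
    · -- k1 = K : at most one parent, ratio n (K+1)
      subst hEq
      have hnn : (0:ℝ) < (n (K+1) : ℝ) := by
        have := (h (K+1) (by omega)).1
        have : (2:ℝ) ≤ (n (K+1):ℝ) := by exact_mod_cast this
        linarith
      have huK1 : u (K + 1) = 1 / (n (K+1) : ℝ) := by
        simp only [hu_def]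
        rw [show Finset.Ioc K (K+1) = {K+1} by
          ext a; rw [Finset.mem_Ioc, Finset.mem_singleton]; omega]
        simp
      have hup : μ (Metric.ball x (2*r) ∩ uniformCantorSet n c) ≤ ENNReal.ofReal PI := by
        have huK : u K = 1 := by
          simp only [hu_def]
          simp
        calc μ (Metric.ball x (2*r) ∩ uniformCantorSet n c) ≤ μ (cInt n c wI K) :=
              measure_mono hballE
          _ = ENNReal.ofReal (PI * u K) := hmu K (le_refl K) wI (wordFinset_isWord hwI)
          _ = ENNReal.ofReal PI := by rw [huK, mul_one]
      calc μ (Metric.ball x (2*r) ∩ uniformCantorSet n c) ≤ ENNReal.ofReal PI := hup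
        _ = ENNReal.ofReal ((n (K+1) : ℝ)) * ENNReal.ofReal (PI * u (K+1)) := by
            rw [← ENNReal.ofReal_mul (le_of_lt hnn)]
            congr 1
            rw [huK1]
            field_simp
        _ ≤ ENNReal.ofReal ((n (K+1) : ℝ)) * μ (Metric.ball x r ∩ uniformCantorSet n c) :=
            mul_le_mul' (le_refl _) hlow1
        _ ≤ D * μ (Metric.ball x r ∩ uniformCantorSet n c) := by
            apply mul_le_mul' ?_ (le_refl _)
            rw [hD_def]
            calc ENNReal.ofReal ((n (K+1) : ℝ))
                ≤ ENNReal.ofReal 108 + ENNReal.ofReal ((n (K+1) : ℝ)) := le_add_self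
              _ ≤ ENNReal.ofReal 108 + ENNReal.ofReal ((n (K+1) : ℝ)) +
                  ENNReal.ofReal ((m * u M)⁻¹) := self_le_add_right _ _
              _ ≤ ENNReal.ofReal 108 + ENNReal.ofReal ((n (K+1) : ℝ)) +
                  ENNReal.ofReal ((m * u M)⁻¹) + 1 := self_le_add_right _ _
    · -- K < k1 : the generic case
      obtain ⟨wJ, hwJ, hxJ⟩ := exists_comp hx k1
      set L := leftpt n c wJ k1 with hL_def
      set δk := cdelta n c (k1+1) with hδk_def
      set sk := cdelta n c (k1+1) + ceps n c (k1+1) with hsk_def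
      set δ1 := cdelta n c k1 with hδ1_def
      have hδk_pos : 0 < δk := cdelta_pos h (k1+1)
      have hεk_pos : 0 < ceps n c (k1+1) := ceps_pos h (by omega)
      have hsk_pos : 0 < sk := by rw [hsk_def]; linarith [cdelta_pos h (k1+1), ceps_pos h (show 1 ≤ k1+1 by omega)]
      have hδksk : δk ≤ sk := by rw [hsk_def, hδk_def]; linarith
      have hδ1_pos : 0 < δ1 := cdelta_pos h k1
      have hrδ1 : r ≤ δ1 := hminlvl k1 (by omega) (by omega)
      have hN2 : 2 ≤ n (k1+1) := (h (k1+1) (by omega)).1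
      have hN2' : (2:ℝ) ≤ ((n (k1+1)):ℝ) := by exact_mod_cast hN2
      have hδ1N : δ1 ≤ ((n (k1+1)):ℝ) * sk := by
        have hid := cdelta_identity h k1
        rw [hδ1_def, hsk_def]
        nlinarith [hεk_pos, hδk_pos]
      have hxJ1 : L ≤ x ∧ x ≤ L + δ1 := hxJ
      have htrJ : truncWord wJ K = wI := comp_unique h
        (truncWord_wordFinset hwJ (by omega)) hwI
        (cInt_subset_trunc h (wordFinset_isWord hwJ) (by omega) hxJ) hxI
      have hJI : cInt n c wJ k1 ⊆ cInt n c wI K := by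
        have h1 := cInt_subset_trunc h (wordFinset_isWord hwJ) (show K ≤ k1 by omega)
        rwa [htrJ] at h1
      set upd : ℕ → (ℕ → ℕ) := fun i => Function.update wJ (k1+1) i with hupd_def
      have hupd_left : ∀ i : ℕ, leftpt n c (upd i) (k1+1) = L + ((i:ℝ) - 1) * sk := by
        intro i
        rw [hupd_def]
        exact leftpt_update wJ k1 i
      have hupd_sub_J : ∀ i, 1 ≤ i → i ≤ n (k1+1) →
          cInt n c (upd i) (k1+1) ⊆ cInt n c wJ k1 := by
        intro i h1 h2
        have hsub := cInt_subset_succ h (isWord_update (wordFinset_isWord hwJ) h1 h2)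
        have hcongr : cInt n c (upd i) k1 = cInt n c wJ k1 :=
          cInt_congr k1 (fun j a b => Function.update_of_ne (by omega) _ _)
        rw [hupd_def] at hcongr ⊢
        rw [hcongr] at hsub
        exact hsub
      -- basic division facts
      have f0 : 0 ≤ r/sk := le_of_lt (div_pos hr hsk_pos)
      have f2 : δk/sk ≤ 1 := (div_le_one hsk_pos).mpr hδksk
      have f5 : δ1/sk ≤ ((n (k1+1)):ℝ) := (div_le_iff₀ hsk_pos).mpr hδ1N
      have f6 : r/sk ≤ δ1/sk := by gcongr
      -- LOWER BOUND: many sibling components inside the small ball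
      set S : Finset ℕ := (Finset.range (n (k1+1))).filter
        (fun t => x - r < L + (t:ℝ) * sk ∧ L + (t:ℝ) * sk + δk < x + r) with hS_def
      have hS_ball : ∀ t ∈ S, cInt n c (upd (t+1)) (k1+1) ⊆ Metric.ball x r := by
        intro t ht y hy
        rw [hS_def, Finset.mem_filter] at ht
        obtain ⟨hy1, hy2⟩ := mem_cInt_isword hy
        rw [hupd_left (t+1)] at hy1 hy2
        push_cast at hy1 hy2
        rw [Metric.mem_ball, Real.dist_eq, abs_lt]
        constructor <;> [nlinarith [ht.2.1, ht.2.2]; nlinarith [ht.2.1, ht.2.2]]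
      have hS_mem : ∀ t ∈ S, upd (t+1) ∈ wordFinset n (k1+1) := by
        intro t ht
        rw [hS_def, Finset.mem_filter, Finset.mem_range] at ht
        exact update_mem_wordFinset hwJ (by omega) (by omega)
      have hdisjS : (S : Set ℕ).PairwiseDisjoint
          (fun t => cInt n c (upd (t+1)) (k1+1) ∩ uniformCantorSet n c) := by
        intro a ha b hb hab
        have hne : upd (a+1) ≠ upd (b+1) := by
          intro hcc
          have hev := congrFun hcc (k1+1)
          rw [hupd_def] at hev
          simp only [Function.update_self] at hev
          omega
        exact (cInt_disjoint h (hS_mem a ha) (hS_mem b hb) hne).mono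
          Set.inter_subset_left Set.inter_subset_left
      have hμsum : μ (⋃ t ∈ S, (cInt n c (upd (t+1)) (k1+1) ∩ uniformCantorSet n c)) =
          ∑ t ∈ S, μ (cInt n c (upd (t+1)) (k1+1) ∩ uniformCantorSet n c) :=
        measure_biUnion_finset hdisjS (fun t _ => measurableSet_Icc.inter measurable_E)
      have hμeach : ∀ t ∈ S, μ (cInt n c (upd (t+1)) (k1+1) ∩ uniformCantorSet n c) =
          ENNReal.ofReal (PI * u (k1+1)) := by
        intro t ht
        have htr : t < n (k1+1) := by
          rw [hS_def, Finset.mem_filter, Finset.mem_range] at ht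
          exact ht.1
        rw [mu_inter_E hμ]
        apply hcompPI (k1+1) (by omega) _ (hS_mem t ht)
        refine ⟨leftpt n c (upd (t+1)) (k1+1), Set.left_mem_Icc.mpr (by
          have := cdelta_pos h (k1+1); linarith), ?_⟩
        apply hJI
        apply hupd_sub_J (t+1) (by omega) (by omega)
        exact Set.left_mem_Icc.mpr (by have := cdelta_pos h (k1+1); linarith)
      have hcardS : r / sk - 2 ≤ (S.card : ℝ) := by
        have hmemS : ∀ z : ℕ, max ((x - r - L)/sk) (-1) < (z:ℝ) →
            (z:ℝ) < min ((x + r - δk - L)/sk) ((n (k1+1)):ℝ) → z ∈ S := by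
          intro z hz1 hz2
          have hz1' : (x - r - L)/sk < (z:ℝ) := lt_of_le_of_lt (le_max_left _ _) hz1
          have hz2a : (z:ℝ) < (x + r - δk - L)/sk := lt_of_lt_of_le hz2 (min_le_left _ _)
          have hz2b : (z:ℝ) < ((n (k1+1)):ℝ) := lt_of_lt_of_le hz2 (min_le_right _ _)
          rw [hS_def, Finset.mem_filter, Finset.mem_range]
          refine ⟨by exact_mod_cast hz2b, ?_, ?_⟩
          · rw [div_lt_iff₀ hsk_pos] at hz1'
            linarith
          · rw [lt_div_iff₀ hsk_pos] at hz2a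
            linarith
        have hIc := interval_le_card (le_max_right _ _) hmemS
        have e1 : (x + r - δk - L)/sk = (x-L)/sk + r/sk - δk/sk := by
          field_simp
          ring
        have e2 : (x - r - L)/sk = (x-L)/sk - r/sk := by
          field_simp
          ring
        have f3 : 0 ≤ (x-L)/sk := div_nonneg (by linarith [hxJ1.1]) (le_of_lt hsk_pos)
        have f4 : (x-L)/sk ≤ δ1/sk := by
          gcongr
          linarith [hxJ1.2]
        have hβα : r/sk - 1 ≤ min ((x + r - δk - L)/sk) ((n (k1+1)):ℝ) -
            max ((x - r - L)/sk) (-1) := by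
          have hδkr : δk/sk ≤ r/sk := by gcongr <;> linarith
          rcases le_total ((x - r - L)/sk) (-1 : ℝ) with hm1 | hm1 <;>
            rcases le_total ((x + r - δk - L)/sk) ((n (k1+1)):ℝ) with hm2 | hm2
          · rw [max_eq_right hm1, min_eq_left hm2]
            linarith
          · rw [max_eq_right hm1, min_eq_right hm2]
            linarith
          · rw [max_eq_left hm1, min_eq_left hm2]
            linarith
          · rw [max_eq_left hm1, min_eq_right hm2]
            linarith
        linarith
      have hX : 0 < PI * u (k1+1) := mul_pos hPI_pos (hu_pos _)
      have hlow2 : ENNReal.ofReal ((r / sk - 2) * (PI * u (k1+1))) ≤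
          μ (Metric.ball x r ∩ uniformCantorSet n c) := by
        calc ENNReal.ofReal ((r/sk - 2) * (PI * u (k1+1)))
            ≤ ENNReal.ofReal ((S.card : ℝ) * (PI * u (k1+1))) := by
              apply ENNReal.ofReal_le_ofReal
              nlinarith [hcardS]
          _ = (S.card : ℝ≥0∞) * ENNReal.ofReal (PI * u (k1+1)) := by
              rw [ENNReal.ofReal_mul (Nat.cast_nonneg _), ENNReal.ofReal_natCast]
          _ = ∑ t ∈ S, μ (cInt n c (upd (t+1)) (k1+1) ∩ uniformCantorSet n c) := by
              rw [Finset.sum_congr rfl hμeach, Finset.sum_const, nsmul_eq_mul]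
          _ = μ (⋃ t ∈ S, (cInt n c (upd (t+1)) (k1+1) ∩ uniformCantorSet n c)) := hμsum.symm
          _ ≤ μ (Metric.ball x r ∩ uniformCantorSet n c) := by
              apply measure_mono
              apply Set.iUnion₂_subset
              intro t ht
              exact Set.inter_subset_inter_left _ (hS_ball t ht)
      -- UPPER BOUND
      set F : Finset (ℕ → ℕ) := (wordFinset n (k1+1)).filter
        (fun w => (cInt n c w (k1+1) ∩ (Metric.ball x (2*r) ∩ uniformCantorSet n c)).Nonempty)
        with hF_def
      have hcover : Metric.ball x (2*r) ∩ uniformCantorSet n c ⊆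
          ⋃ w ∈ F, cInt n c w (k1+1) := by
        intro y hy
        obtain ⟨w, hw, hyw⟩ := exists_comp hy.2 (k1+1)
        rw [Set.mem_iUnion₂]
        exact ⟨w, by rw [hF_def, Finset.mem_filter]; exact ⟨hw, ⟨y, hyw, hy⟩⟩, hyw⟩
      have hμF : ∀ w ∈ F, μ (cInt n c w (k1+1)) = ENNReal.ofReal (PI * u (k1+1)) := by
        intro w hw
        rw [hF_def, Finset.mem_filter] at hw
        obtain ⟨hw1, y, hy1, hyb, hyE⟩ := hw
        apply hcompPI (k1+1) (by omega) w hw1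
        refine ⟨y, hy1, ?_⟩
        apply hsame y hyE
        rw [Metric.mem_ball, Real.dist_eq] at hyb
        rw [abs_sub_comm]
        linarith
      have hup0 : μ (Metric.ball x (2*r) ∩ uniformCantorSet n c) ≤
          (F.card : ℝ≥0∞) * ENNReal.ofReal (PI * u (k1+1)) := by
        calc μ (Metric.ball x (2*r) ∩ uniformCantorSet n c)
            ≤ μ (⋃ w ∈ F, cInt n c w (k1+1)) := measure_mono hcover
          _ ≤ ∑ w ∈ F, μ (cInt n c w (k1+1)) := measure_biUnion_finset_le _ _
          _ = F.card • ENNReal.ofReal (PI * u (k1+1)) := by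
              rw [Finset.sum_congr rfl hμF, Finset.sum_const]
          _ = (F.card : ℝ≥0∞) * ENNReal.ofReal (PI * u (k1+1)) := nsmul_eq_mul _ _
      set G : Finset (ℕ → ℕ) := F.image (fun w => truncWord w k1) with hG_def
      have hGsub : G ⊆ wordFinset n k1 := by
        intro g hg
        rw [hG_def, Finset.mem_image] at hg
        obtain ⟨w, hw, rfl⟩ := hg
        rw [hF_def, Finset.mem_filter] at hw
        exact truncWord_wordFinset hw.1 (by omega)
      have hGmeet : ∀ g ∈ G, (cInt n c g k1 ∩ Set.Ioo (x - 2*r) (x + 2*r)).Nonempty := by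
        intro g hg
        rw [hG_def, Finset.mem_image] at hg
        obtain ⟨w, hw, rfl⟩ := hg
        rw [hF_def, Finset.mem_filter] at hw
        obtain ⟨hw1, y, hy1, hyb, hyE⟩ := hw
        refine ⟨y, cInt_subset_trunc h (wordFinset_isWord hw1) (by omega) hy1, ?_⟩
        rwa [Real.ball_eq_Ioo] at hyb
      have hGcard : (G.card : ℝ) ≤ 6 := by
        have hcv := card_vol h hGsub (a := x - 2*r) (b := x + 2*r) (by linarith) hGmeet
        have h6 : (G.card : ℝ) * δ1 ≤ 6 * δ1 := by
          rw [hδ1_def]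
          calc (G.card : ℝ) * cdelta n c k1 ≤ (x + 2*r - (x - 2*r)) + 2 * cdelta n c k1 := hcv
            _ ≤ 6 * cdelta n c k1 := by
                rw [hδ1_def] at hrδ1
                linarith
        nlinarith [hδ1_pos]
      have hFg : ∀ g ∈ G, ((F.filter (fun w => truncWord w k1 = g)).card : ℝ) ≤
          4*(r/sk) + 2 := by
        intro g hg
        set Lg := leftpt n c g k1 with hLg_def
        set Fg := F.filter (fun w => truncWord w k1 = g) with hFg_def
        have hmap : ∀ w ∈ Fg, ((x - 2*r - δk - Lg)/sk + 1 < ((w (k1+1)):ℝ) ∧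
            ((w (k1+1)):ℝ) < (x + 2*r - Lg)/sk + 1) := by
          intro w hw
          rw [hFg_def, Finset.mem_filter] at hw
          obtain ⟨hwF, hwg⟩ := hw
          rw [hF_def, Finset.mem_filter] at hwF
          obtain ⟨hw1, y, hy1, hyb, hyE⟩ := hwF
          have hwu : w = Function.update g (k1+1) (w (k1+1)) := by
            rw [← hwg]
            exact eq_update_self hw1
          have hlw : leftpt n c w (k1+1) = Lg + (((w (k1+1)):ℝ) - 1) * sk := by
            conv_lhs => rw [hwu]
            rw [hLg_def, hsk_def]
            exact leftpt_update g k1 (w (k1+1))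
          obtain ⟨hy1a, hy1b⟩ := mem_cInt_isword hy1
          rw [hlw] at hy1a hy1b
          rw [Metric.mem_ball, Real.dist_eq, abs_lt] at hyb
          have hgt : x - 2*r - δk - Lg < (((w (k1+1)):ℝ) - 1) * sk := by linarith
          have hltb : (((w (k1+1)):ℝ) - 1) * sk < x + 2*r - Lg := by linarith
          constructor
          · have hdiv : (x - 2*r - δk - Lg)/sk < ((w (k1+1)):ℝ) - 1 := by
              rw [div_lt_iff₀ hsk_pos]
              exact hgt
            linarith
          · have hdiv : ((w (k1+1)):ℝ) - 1 < (x + 2*r - Lg)/sk := by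
              rw [lt_div_iff₀ hsk_pos]
              exact hltb
            linarith
        have hinj : Set.InjOn (fun w : ℕ → ℕ => w (k1+1)) (Fg : Set (ℕ → ℕ)) := by
          intro a ha b hb hab
          rw [Finset.mem_coe, hFg_def, Finset.mem_filter] at ha hb
          have haF := ha.1
          have hbF := hb.1
          rw [hF_def, Finset.mem_filter] at haF hbF
          have ha' : a = Function.update g (k1+1) (a (k1+1)) := by
            rw [← ha.2]; exact eq_update_self haF.1
          have hb' : b = Function.update g (k1+1) (b (k1+1)) := by
            rw [← hb.2]; exact eq_update_self hbF.1
          rw [ha', hb']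
          simp only at hab
          rw [hab]
        have hαβ : (x - 2*r - δk - Lg)/sk + 1 ≤ (x + 2*r - Lg)/sk + 1 := by
          gcongr
          linarith
        have hIcc := card_le_interval hαβ (S := Fg.image (fun w => w (k1+1))) ?_
        · have hcardim : Fg.card = (Fg.image (fun w => w (k1+1))).card :=
            (Finset.card_image_of_injOn hinj).symm
          rw [hcardim]
          have e3 : (x + 2*r - Lg)/sk - (x - 2*r - δk - Lg)/sk = (4*r + δk)/sk := by
            rw [div_sub_div_same]
            congr 1
            ring
          have e4 : (4*r + δk)/sk = 4*(r/sk) + δk/sk := by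
            field_simp
          calc ((Fg.image (fun w => w (k1+1))).card : ℝ)
              ≤ ((x + 2*r - Lg)/sk + 1) - ((x - 2*r - δk - Lg)/sk + 1) + 1 := hIcc
            _ = (4*r + δk)/sk + 1 := by rw [← e3]; ring
            _ ≤ 4*(r/sk) + 2 := by rw [e4]; linarith
        · intro i hi
          rw [Finset.mem_image] at hi
          obtain ⟨w, hw, rfl⟩ := hi
          exact hmap w hw
      have hFcard : (F.card : ℝ) ≤ 6 * (4*(r/sk) + 2) := by
        have heq : F.card = ∑ g ∈ G, (F.filter (fun w => truncWord w k1 = g)).card := by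
          rw [hG_def]
          exact Finset.card_eq_sum_card_image _ _
        have hcast : (F.card : ℝ) = ∑ g ∈ G, ((F.filter (fun w => truncWord w k1 = g)).card : ℝ) := by
          rw [heq]
          push_cast
          rfl
        rw [hcast]
        have hnn2 : (0:ℝ) ≤ 4*(r/sk)+2 := by linarith
        calc ∑ g ∈ G, ((F.filter (fun w => truncWord w k1 = g)).card : ℝ)
            ≤ ∑ g ∈ G, (4*(r/sk)+2) := Finset.sum_le_sum hFg
          _ = (G.card : ℝ) * (4*(r/sk)+2) := by rw [Finset.sum_const, nsmul_eq_mul]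
          _ ≤ 6 * (4*(r/sk)+2) := by nlinarith [hGcard]
      have hup : μ (Metric.ball x (2*r) ∩ uniformCantorSet n c) ≤
          ENNReal.ofReal ((6*(4*(r/sk)+2)) * (PI * u (k1+1))) := by
        calc μ (Metric.ball x (2*r) ∩ uniformCantorSet n c)
            ≤ (F.card : ℝ≥0∞) * ENNReal.ofReal (PI * u (k1+1)) := hup0
          _ = ENNReal.ofReal ((F.card : ℝ) * (PI * u (k1+1))) := by
              rw [ENNReal.ofReal_mul (Nat.cast_nonneg _), ENNReal.ofReal_natCast]
          _ ≤ ENNReal.ofReal ((6*(4*(r/sk)+2)) * (PI * u (k1+1))) := by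
              apply ENNReal.ofReal_le_ofReal
              nlinarith [hFcard, hX]
      have hD108 : ENNReal.ofReal 108 ≤ D := by
        rw [hD_def]
        calc ENNReal.ofReal 108 ≤ ENNReal.ofReal 108 + ENNReal.ofReal ((n (K+1) : ℝ)) :=
              self_le_add_right _ _
          _ ≤ ENNReal.ofReal 108 + ENNReal.ofReal ((n (K+1) : ℝ)) +
              ENNReal.ofReal ((m * u M)⁻¹) := self_le_add_right _ _
          _ ≤ ENNReal.ofReal 108 + ENNReal.ofReal ((n (K+1) : ℝ)) +
              ENNReal.ofReal ((m * u M)⁻¹) + 1 := self_le_add_right _ _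
      rcases le_total (r/sk) 4 with ht4 | ht4
      · calc μ (Metric.ball x (2*r) ∩ uniformCantorSet n c)
            ≤ ENNReal.ofReal ((6*(4*(r/sk)+2)) * (PI * u (k1+1))) := hup
          _ ≤ ENNReal.ofReal (108 * (PI * u (k1+1))) := by
              apply ENNReal.ofReal_le_ofReal
              nlinarith [hX, ht4]
          _ = ENNReal.ofReal 108 * ENNReal.ofReal (PI * u (k1+1)) :=
              ENNReal.ofReal_mul (by norm_num)
          _ ≤ ENNReal.ofReal 108 * μ (Metric.ball x r ∩ uniformCantorSet n c) :=
              mul_le_mul' (le_refl _) hlow1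
          _ ≤ D * μ (Metric.ball x r ∩ uniformCantorSet n c) :=
              mul_le_mul' hD108 (le_refl _)
      · calc μ (Metric.ball x (2*r) ∩ uniformCantorSet n c)
            ≤ ENNReal.ofReal ((6*(4*(r/sk)+2)) * (PI * u (k1+1))) := hup
          _ ≤ ENNReal.ofReal (108 * ((r/sk - 2) * (PI * u (k1+1)))) := by
              apply ENNReal.ofReal_le_ofReal
              nlinarith [hX, ht4, mul_nonneg (by linarith : (0:ℝ) ≤ 84*(r/sk) - 228)
                (le_of_lt hX)]
          _ = ENNReal.ofReal 108 * ENNReal.ofReal ((r/sk - 2) * (PI * u (k1+1))) :=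
              ENNReal.ofReal_mul (by norm_num)
          _ ≤ ENNReal.ofReal 108 * μ (Metric.ball x r ∩ uniformCantorSet n c) :=
              mul_le_mul' (le_refl _) hlow2
          _ ≤ D * μ (Metric.ball x r ∩ uniformCantorSet n c) :=
              mul_le_mul' hD108 (le_refl _)
  · -- large radii
    have hub : μ (Metric.ball x (2*r) ∩ uniformCantorSet n c) ≤ 1 := by
      rw [← hprob.measure_univ]
      exact measure_mono (Set.subset_univ _)
    obtain ⟨wM, hwM, hxM⟩ := exists_comp hx M
    have hMr : cdelta n c M < r := by linarith
    have hlb : ENNReal.ofReal (m * u M) ≤ μ (Metric.ball x r ∩ uniformCantorSet n c) := by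
      have hsub : cInt n c wM M ∩ uniformCantorSet n c ⊆
          Metric.ball x r ∩ uniformCantorSet n c :=
        Set.inter_subset_inter_left _ (comp_subset_ball h hxM hMr)
      calc ENNReal.ofReal (m * u M)
          ≤ ENNReal.ofReal ((∏ j ∈ Finset.Icc 1 K, p j (wM j)) * u M) := by
            apply ENNReal.ofReal_le_ofReal
            have h1 : m ≤ ∏ j ∈ Finset.Icc 1 K, p j (wM j) := by
              have h2 := hm_le (truncWord wM K) (truncWord_wordFinset hwM hMK)
              have h3 : ∏ j ∈ Finset.Icc 1 K, p j (truncWord wM K j) =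
                  ∏ j ∈ Finset.Icc 1 K, p j (wM j) := by
                apply Finset.prod_congr rfl
                intro j hj
                rw [Finset.mem_Icc] at hj
                rw [truncWord_agree wM K j hj.1 hj.2]
              linarith [h2, h3.ge, h3.le]
            have := hu_pos M
            nlinarith
        _ = μ (cInt n c wM M) := by
            rw [hmu M hMK wM (wordFinset_isWord hwM)]
        _ = μ (cInt n c wM M ∩ uniformCantorSet n c) := (mu_inter_E hμ _).symm
        _ ≤ μ (Metric.ball x r ∩ uniformCantorSet n c) := measure_mono hsub
    have hmuM_pos : 0 < m * u M := by
      have := hu_pos M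
      nlinarith
    calc μ (Metric.ball x (2*r) ∩ uniformCantorSet n c) ≤ 1 := hub
      _ = ENNReal.ofReal ((m * u M)⁻¹) * ENNReal.ofReal (m * u M) := by
          rw [← ENNReal.ofReal_mul (by positivity),
            inv_mul_cancel₀ (ne_of_gt hmuM_pos), ENNReal.ofReal_one]
      _ ≤ D * μ (Metric.ball x r ∩ uniformCantorSet n c) := by
          apply mul_le_mul' ?_ hlb
          rw [hD_def]
          calc ENNReal.ofReal ((m * u M)⁻¹)
              ≤ ENNReal.ofReal 108 + ENNReal.ofReal ((n (K+1) : ℝ)) +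
                ENNReal.ofReal ((m * u M)⁻¹) := le_add_self
            _ ≤ ENNReal.ofReal 108 + ENNReal.ofReal ((n (K+1) : ℝ)) +
                ENNReal.ofReal ((m * u M)⁻¹) + 1 := self_le_add_right _ _
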